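/- arXiv:1602.03496 — 2 statements merged into one kernel-verified Lean document; each statement's English description precedes it below -/
import Mathlib

section
/- Let m ≥ 1 be an integer and let f = (y^m z^m − x^{2m})² y^m − x^{5m} ∈ S. Set ρ₁ = (0, 2y^{m+1}z^{m−1}, x^{2m} − 3y^m z^m) and ρ₂ = (2x^{2m}y^{m−1} − 2y^{2m−1}z^m, 10x^{3m−1} − 8x^{2m−1}y^m + 30x^{m−1}y^m z^m, 8x^{2m−1}y^{m−1}z − 45x^{m−1}y^{m−1}z^{m+1}). Then ρ₁ and ρ₂ are syzygies of f, of degrees 2m and 3m−1 respectively, and every syzygy of f can be written uniquely as g·ρ₁ + h·ρ₂ with g, h ∈ S; that is, the graded S-module AR(f) of all syzygies of f is free with basis ρ₁, ρ₂ (so the curve f = 0 is free with exponents (2m, 3m−1)). -/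
open MvPolynomial

noncomputable section

abbrev P3 : Type := MvPolynomial (Fin 3) ℂ

abbrev X0 : P3 := X 0
abbrev X1 : P3 := X 1
abbrev X2 : P3 := X 2

/-- The graded piece `S_j` of `S = ℂ[x,y,z]`, with `S_j = 0` for `j < 0`. -/
def homZ (j : ℤ) : Submodule ℂ P3 :=
  if 0 ≤ j then homogeneousSubmodule (Fin 3) ℂ j.toNat else ⊥

/-- The Jacobian ideal of `f`. -/
def Jf (f : P3) : Ideal P3 :=
  Ideal.span {pderiv 0 f, pderiv 1 f, pderiv 2 f}

/-- The space of syzygies `(a,b,c) ∈ S_{q-2}³` of `f` whose divergence lies in the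
Jacobian ideal: the representatives of `E₂^{1-t,t}(f)_k`, where `q = t·d + k`. -/
def E2Z (f : P3) (q : ℤ) : Submodule ℂ (P3 × P3 × P3) where
  carrier := {v | v.1 ∈ homZ (q - 2) ∧ v.2.1 ∈ homZ (q - 2) ∧ v.2.2 ∈ homZ (q - 2) ∧
    v.1 * pderiv 0 f + v.2.1 * pderiv 1 f + v.2.2 * pderiv 2 f = 0 ∧
    pderiv 0 v.1 + pderiv 1 v.2.1 + pderiv 2 v.2.2 ∈ Jf f}
  zero_mem' := by
    exact ⟨zero_mem _, zero_mem _, zero_mem _, by simp, by simp⟩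
  add_mem' := by
    rintro a b ⟨ha1, ha2, ha3, ha4, ha5⟩ ⟨hb1, hb2, hb3, hb4, hb5⟩
    refine ⟨add_mem ha1 hb1, add_mem ha2 hb2, add_mem ha3 hb3,
      by simp only [Prod.fst_add, Prod.snd_add]; linear_combination ha4 + hb4, ?_⟩
    have h : pderiv (0 : Fin 3) (a.1 + b.1) + pderiv 1 (a.2.1 + b.2.1)
        + pderiv 2 (a.2.2 + b.2.2)
        = (pderiv 0 a.1 + pderiv 1 a.2.1 + pderiv 2 a.2.2)
          + (pderiv 0 b.1 + pderiv 1 b.2.1 + pderiv 2 b.2.2) := by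
      simp only [map_add]; ring
    simpa only [Prod.fst_add, Prod.snd_add, h] using add_mem ha5 hb5
  smul_mem' := by
    rintro c a ⟨ha1, ha2, ha3, ha4, ha5⟩
    refine ⟨Submodule.smul_mem _ c ha1, Submodule.smul_mem _ c ha2,
      Submodule.smul_mem _ c ha3, ?_, ?_⟩
    · simp only [Prod.smul_fst, Prod.smul_snd, smul_mul_assoc, ← smul_add, ha4, smul_zero]
    · have h : pderiv (0 : Fin 3) (c • a.1) + pderiv 1 (c • a.2.1) + pderiv 2 (c • a.2.2)
          = C c * (pderiv 0 a.1 + pderiv 1 a.2.1 + pderiv 2 a.2.2) := by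
        simp only [smul_eq_C_mul, pderiv_C_mul]; ring
      simpa only [Prod.smul_fst, Prod.smul_snd, h] using Ideal.mul_mem_left _ _ ha5

/-- The space of Koszul syzygies of `f` of degree `q` (i.e. `(df ∧ Ω¹)_q`),
coming from `P, Q, R ∈ S_{q-d-1}` where `d = deg f`. -/
def KZ (f : P3) (d q : ℤ) : Submodule ℂ (P3 × P3 × P3) :=
  Submodule.span ℂ {v | ∃ Pp Qq Rr : P3, Pp ∈ homZ (q - d - 1) ∧ Qq ∈ homZ (q - d - 1) ∧
    Rr ∈ homZ (q - d - 1) ∧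
    v = (Rr * pderiv 1 f - Qq * pderiv 2 f,
         Pp * pderiv 2 f - Rr * pderiv 0 f,
         Qq * pderiv 0 f - Pp * pderiv 1 f)}

/-- The term `E₂^{1-t,t}(f)_k` of the second page of Dimca's Koszul-de Rham spectral
sequence, where `q = t·d + k`: syzygies of degree `q-2` with divergence in the Jacobian
ideal, modulo Koszul syzygies. -/
abbrev E2Q (f : P3) (d q : ℤ) :=
  E2Z f q ⧸ (KZ f d q).comap (E2Z f q).subtype

/-!
For the Euler vector `E = (x, y, z)` one has `E ⬝ ∇f = 5m·f` and `E ⬝ (ρ₁ × ρ₂) = 10 f`.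
For a syzygy `v`, Cramer's rule writes `(E ⬝ ρ₁ × ρ₂)·v` as `(E ⬝ v × ρ₂)·ρ₁ + (E ⬝ ρ₁ × v)·ρ₂`;
the third term `(v ⬝ ρ₁ × ρ₂)·E` vanishes because `ρ₁ × ρ₂` is parallel to `∇f`. As `v × ρ₂`
is parallel to `∇f` too, `(E ⬝ v × ρ₂)·f_z = (E ⬝ ∇f)·(v × ρ₂)_z` is divisible by `f`, and `f` is
coprime to `f_z = 2m y^{2m} z^{m-1} (y^m z^m - x^{2m})`. So both coefficients are multiples of
`f`, and dividing by `10 f` expresses `v` through `ρ₁, ρ₂`; uniqueness holds because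
`E ⬝ ρ₁ × ρ₂ ≠ 0`.
-/

open Matrix

section CrossProduct

variable {R : Type*} [CommRing R]

/-- Cramer's rule. -/
theorem triple_product_smul_eq (e u v w : Fin 3 → R) :
    (e ⬝ᵥ u ⨯₃ v) • w = (e ⬝ᵥ w ⨯₃ v) • u + (e ⬝ᵥ u ⨯₃ w) • v + (w ⬝ᵥ u ⨯₃ v) • e := by
  ext i
  fin_cases i <;>
  · simp only [cross_apply, vec3_dotProduct, Pi.add_apply, Pi.smul_apply, smul_eq_mul,
      Fin.isValue, cons_val_zero, cons_val_one, cons_val, Fin.zero_eta, Fin.mk_one, Fin.reduceFinMk]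
    ring

theorem dotProduct_smul_eq_of_cross_eq_zero {a b : Fin 3 → R} (h : a ⨯₃ b = 0) (e : Fin 3 → R) :
    (e ⬝ᵥ a) • b = (e ⬝ᵥ b) • a := by
  have h' := cross_cross_eq_smul_sub_smul' e a b
  rw [h, map_zero, dotProduct_comm a, eq_comm, sub_eq_zero] at h'
  exact h'.symm

theorem cross_cross_eq_zero_of_dotProduct_eq_zero {v w g : Fin 3 → R} (hv : v ⬝ᵥ g = 0)
    (hw : w ⬝ᵥ g = 0) : v ⨯₃ w ⨯₃ g = 0 := by
  rw [cross_cross_eq_smul_sub_smul, hv, hw, zero_smul, zero_smul, sub_zero]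

theorem dvd_triple_product_of_dotProduct_eq_zero [DecompositionMonoid R] {e g v w : Fin 3 → R}
    {f : R} {i : Fin 3} (hg : f ∣ e ⬝ᵥ g) (hcop : IsRelPrime f (g i)) (hv : v ⬝ᵥ g = 0)
    (hw : w ⬝ᵥ g = 0) : f ∣ e ⬝ᵥ v ⨯₃ w := by
  have h := congrFun (dotProduct_smul_eq_of_cross_eq_zero
    (cross_cross_eq_zero_of_dotProduct_eq_zero hv hw) e) i
  simp only [Pi.smul_apply, smul_eq_mul] at h
  exact hcop.dvd_of_dvd_mul_right (h ▸ hg.mul_right _)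

end CrossProduct

section SyzygyBasis

variable {R : Type*} [CommRing R] [IsDomain R] {e g ρ₁ ρ₂ : Fin 3 → R} {f c d : R}

theorem eq_of_smul_add_smul_eq (hdet : e ⬝ᵥ ρ₁ ⨯₃ ρ₂ ≠ 0) {a b a' b' : R}
    (h : a • ρ₁ + b • ρ₂ = a' • ρ₁ + b' • ρ₂) : a = a' ∧ b = b' := by
  have h₁ := congrArg (fun v => e ⬝ᵥ v ⨯₃ ρ₂) h
  have h₂ := congrArg (fun v => e ⬝ᵥ ρ₁ ⨯₃ v) h
  simp only [map_add, map_smul, LinearMap.add_apply, LinearMap.smul_apply, cross_self,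
    smul_zero, add_zero, zero_add, dotProduct_smul, smul_eq_mul] at h₁ h₂
  exact ⟨mul_right_cancel₀ hdet h₁, mul_right_cancel₀ hdet h₂⟩

theorem exists_eq_smul_add_smul [DecompositionMonoid R] {i : Fin 3} (hρ₁ : ρ₁ ⬝ᵥ g = 0)
    (hρ₂ : ρ₂ ⬝ᵥ g = 0) (he : e ⬝ᵥ g = d * f) (hd : d ≠ 0) (hf : f ≠ 0)
    (hdet : e ⬝ᵥ ρ₁ ⨯₃ ρ₂ = c * f) (hc : IsUnit c) (hcop : IsRelPrime f (g i))
    {v : Fin 3 → R} (hv : v ⬝ᵥ g = 0) : ∃ a b : R, v = a • ρ₁ + b • ρ₂ := by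
  have hv_triple : v ⬝ᵥ ρ₁ ⨯₃ ρ₂ = 0 := by
    have h := congrArg (v ⬝ᵥ ·) (dotProduct_smul_eq_of_cross_eq_zero
      (cross_cross_eq_zero_of_dotProduct_eq_zero hρ₁ hρ₂) e)
    simp only [dotProduct_smul, smul_eq_mul, hv, mul_zero, he] at h
    exact (mul_eq_zero.1 h.symm).resolve_left (mul_ne_zero hd hf)
  have hfe : f ∣ e ⬝ᵥ g := he ▸ dvd_mul_left f d
  obtain ⟨p, hp⟩ := dvd_triple_product_of_dotProduct_eq_zero hfe hcop hv hρ₂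
  obtain ⟨q, hq⟩ := dvd_triple_product_of_dotProduct_eq_zero hfe hcop hρ₁ hv
  have hcramer := triple_product_smul_eq e ρ₁ ρ₂ v
  rw [hdet, hp, hq, hv_triple, zero_smul, add_zero, mul_comm c, mul_smul, mul_smul, mul_smul,
    ← smul_add] at hcramer
  obtain ⟨u, rfl⟩ := hc
  refine ⟨↑u⁻¹ * p, ↑u⁻¹ * q, ?_⟩
  rw [mul_smul, mul_smul, ← smul_add, ← smul_right_injective (Fin 3 → R) hf hcramer, smul_smul,
    Units.inv_mul, one_smul]

theorem existsUnique_eq_smul_add_smul [DecompositionMonoid R] {i : Fin 3} (hρ₁ : ρ₁ ⬝ᵥ g = 0)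
    (hρ₂ : ρ₂ ⬝ᵥ g = 0) (he : e ⬝ᵥ g = d * f) (hd : d ≠ 0) (hf : f ≠ 0)
    (hdet : e ⬝ᵥ ρ₁ ⨯₃ ρ₂ = c * f) (hc : IsUnit c) (hcop : IsRelPrime f (g i))
    {v : Fin 3 → R} (hv : v ⬝ᵥ g = 0) : ∃! p : R × R, v = p.1 • ρ₁ + p.2 • ρ₂ := by
  obtain ⟨a, b, hab⟩ := exists_eq_smul_add_smul hρ₁ hρ₂ he hd hf hdet hc hcop hv
  refine ⟨(a, b), hab, fun p hp => ?_⟩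
  obtain ⟨h₁, h₂⟩ :=
    eq_of_smul_add_smul_eq (hdet ▸ mul_ne_zero hc.ne_zero hf) (hp.symm.trans hab)
  exact Prod.ext h₁ h₂

end SyzygyBasis

def tripleEquiv (R : Type*) [CommRing R] : (R × R × R) ≃ₗ[R] (Fin 3 → R) where
  toFun v := ![v.1, v.2.1, v.2.2]
  invFun w := (w 0, w 1, w 2)
  map_add' _ _ := by ext i; fin_cases i <;> rfl
  map_smul' _ _ := by ext i; fin_cases i <;> rfl
  left_inv _ := rfl
  right_inv w := by ext i; fin_cases i <;> rfl

@[simp]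
theorem tripleEquiv_apply {R : Type*} [CommRing R] (v : R × R × R) :
    tripleEquiv R v = ![v.1, v.2.1, v.2.2] :=
  rfl

theorem LinearEquiv.existsUnique_eq_smul_add_smul_iff {R M N : Type*} [Semiring R]
    [AddCommMonoid M] [AddCommMonoid N] [Module R M] [Module R N] (φ : M ≃ₗ[R] N)
    (v r₁ r₂ : M) :
    (∃! p : R × R, φ v = p.1 • φ r₁ + p.2 • φ r₂) ↔ ∃! p : R × R, v = p.1 • r₁ + p.2 • r₂ := by
  simp only [← map_smul, ← map_add, φ.injective.eq_iff]

def IsSyzygy {R : Type*} [CommRing R] (f : MvPolynomial (Fin 3) R)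
    (v : MvPolynomial (Fin 3) R × MvPolynomial (Fin 3) R × MvPolynomial (Fin 3) R) : Prop :=
  v.1 * pderiv 0 f + v.2.1 * pderiv 1 f + v.2.2 * pderiv 2 f = 0

theorem isSyzygy_iff_dotProduct {R : Type*} [CommRing R] {f : MvPolynomial (Fin 3) R}
    {v : MvPolynomial (Fin 3) R × MvPolynomial (Fin 3) R × MvPolynomial (Fin 3) R} :
    IsSyzygy f v ↔ tripleEquiv _ v ⬝ᵥ (fun i => pderiv i f) = 0 := by
  simp only [IsSyzygy, tripleEquiv_apply, vec3_dotProduct, cons_val_zero, cons_val_one,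
    cons_val_two, head_cons, tail_cons]

theorem MvPolynomial.isRelPrime_X_of_eval_ne_zero {σ R : Type*} [CommRing R] [IsDomain R]
    {p : MvPolynomial σ R} {i : σ} {x : σ → R} (hx : x i = 0) (hp : eval x p ≠ 0) :
    IsRelPrime p (X i) :=
  (X_prime.irreducible.isRelPrime_iff_not_dvd.2 fun ⟨q, hq⟩ => hp (by simp [hq, hx])).symm

theorem MvPolynomial.isUnit_natCast {σ K : Type*} [Field K] [CharZero K] {n : ℕ} (hn : n ≠ 0) :
    IsUnit (n : MvPolynomial σ K) := by
  rw [← map_natCast (C : K →+* MvPolynomial σ K)]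
  exact (isUnit_iff_ne_zero.2 (Nat.cast_ne_zero.2 hn)).map C

theorem isHomogeneous_natCast_mul_X_pows (c i j l : ℕ) {n : ℕ} (h : i + j + l = n) :
    ((c : P3) * X0 ^ i * X1 ^ j * X2 ^ l).IsHomogeneous n := by
  have hc : (c : P3).IsHomogeneous 0 := by simpa using isHomogeneous_C (Fin 3) (c : ℂ)
  subst h
  simpa using ((hc.mul (isHomogeneous_X_pow 0 i)).mul (isHomogeneous_X_pow 1 j)).mul
    (isHomogeneous_X_pow 2 l)

section Curve

/-! The curve and its syzygies are indexed by `k = m - 1`, so that no exponent involves a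
truncated subtraction. -/

variable (k : ℕ)

def curveU : P3 := X1 ^ (k + 1) * X2 ^ (k + 1) - X0 ^ (2 * k + 2)

def curvePoly : P3 := curveU k ^ 2 * X1 ^ (k + 1) - X0 ^ (5 * k + 5)

def curveSyz₁ : P3 × P3 × P3 :=
  (0, 2 * X1 ^ (k + 2) * X2 ^ k, X0 ^ (2 * k + 2) - 3 * X1 ^ (k + 1) * X2 ^ (k + 1))

def curveSyz₂ : P3 × P3 × P3 :=
  (2 * X0 ^ (2 * k + 2) * X1 ^ k - 2 * X1 ^ (2 * k + 1) * X2 ^ (k + 1),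
   10 * X0 ^ (3 * k + 2) - 8 * X0 ^ (2 * k + 1) * X1 ^ (k + 1)
     + 30 * X0 ^ k * X1 ^ (k + 1) * X2 ^ (k + 1),
   8 * X0 ^ (2 * k + 1) * X1 ^ k * X2 - 45 * X0 ^ k * X1 ^ k * X2 ^ (k + 2))

theorem pderiv_curvePoly :
    pderiv 0 (curvePoly k) = -(4 * (k + 1 : P3)) * X0 ^ (2 * k + 1) * X1 ^ (k + 1) * curveU k
        - 5 * (k + 1 : P3) * X0 ^ (5 * k + 4) ∧
    pderiv 1 (curvePoly k) = (k + 1 : P3) * X1 ^ k * curveU k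
        * (3 * X1 ^ (k + 1) * X2 ^ (k + 1) - X0 ^ (2 * k + 2)) ∧
    pderiv 2 (curvePoly k) = 2 * (k + 1 : P3) * X1 ^ (2 * k + 2) * X2 ^ k * curveU k := by
  refine ⟨?_, ?_, ?_⟩ <;>
  · simp only [curvePoly, curveU, map_sub, Derivation.leibniz, Derivation.leibniz_pow, pderiv_X,
      Pi.single_apply, smul_eq_mul, nsmul_eq_mul, Nat.add_one_sub_one, Nat.cast_add, Nat.cast_mul,
      Nat.cast_ofNat, Nat.cast_one, add_tsub_cancel_right, Fin.reduceEq, if_true, if_false]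
    ring

theorem isSyzygy_curveSyz₁ : IsSyzygy (curvePoly k) (curveSyz₁ k) := by
  obtain ⟨h0, h1, h2⟩ := pderiv_curvePoly k
  rw [IsSyzygy, h0, h1, h2, curveSyz₁, curveU]
  ring

theorem isSyzygy_curveSyz₂ : IsSyzygy (curvePoly k) (curveSyz₂ k) := by
  obtain ⟨h0, h1, h2⟩ := pderiv_curvePoly k
  rw [IsSyzygy, h0, h1, h2, curveSyz₂, curveU]
  ring

theorem X_dotProduct_gradient_curvePoly :
    X ⬝ᵥ (fun i => pderiv i (curvePoly k)) = (5 * (k + 1) : P3) * curvePoly k := by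
  obtain ⟨h0, h1, h2⟩ := pderiv_curvePoly k
  rw [vec3_dotProduct, h0, h1, h2, curvePoly, curveU]
  ring

theorem X_dotProduct_curveSyz₁_cross_curveSyz₂ :
    X ⬝ᵥ tripleEquiv P3 (curveSyz₁ k) ⨯₃ tripleEquiv P3 (curveSyz₂ k) = 10 * curvePoly k := by
  simp only [tripleEquiv_apply, cross_apply, vec3_dotProduct, curveSyz₁, curveSyz₂, curvePoly,
    curveU, Fin.isValue, cons_val_zero, cons_val_one, cons_val, zero_mul, sub_zero, zero_sub,
    mul_neg]
  ring

theorem curvePoly_ne_zero : curvePoly k ≠ 0 := by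
  intro h
  simpa [curvePoly, curveU] using congrArg (eval ![1, 0, 0]) h

theorem isRelPrime_curvePoly_pderiv_two :
    IsRelPrime (curvePoly k) (pderiv 2 (curvePoly k)) := by
  have hX₁ : IsRelPrime (curvePoly k) X1 :=
    isRelPrime_X_of_eval_ne_zero (x := ![1, 0, 0]) rfl (by simp [curvePoly, curveU])
  have hX₂ : IsRelPrime (curvePoly k) X2 :=
    isRelPrime_X_of_eval_ne_zero (x := ![1, 0, 0]) rfl (by simp [curvePoly, curveU])
  have hU : IsRelPrime (curvePoly k) (curveU k) := by
    have hX₀ : IsRelPrime (curveU k) X0 :=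
      isRelPrime_X_of_eval_ne_zero (x := ![0, 1, 1]) rfl (by simp [curveU])
    rw [show curvePoly k = curveU k * (curveU k * X1 ^ (k + 1)) - X0 ^ (5 * k + 5) by
      rw [curvePoly]; ring, IsRelPrime.mul_sub_left_left_iff]
    exact hX₀.pow_right.symm
  have hunit : IsUnit (2 * (k + 1) : P3) := by
    exact_mod_cast isUnit_natCast (σ := Fin 3) (K := ℂ) (n := 2 * (k + 1)) (by omega)
  rw [(pderiv_curvePoly k).2.2, mul_assoc, mul_assoc, isRelPrime_mul_unit_left_right hunit]
  exact hX₁.pow_right.mul_right (hX₂.pow_right.mul_right hU)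

theorem isHomogeneous_curveSyz₁ : (curveSyz₁ k).1.IsHomogeneous (2 * (k + 1)) ∧
    (curveSyz₁ k).2.1.IsHomogeneous (2 * (k + 1)) ∧
    (curveSyz₁ k).2.2.IsHomogeneous (2 * (k + 1)) := by
  simp only [curveSyz₁]
  refine ⟨isHomogeneous_zero _ _ _, ?_, .sub ?_ ?_⟩
  · simpa using isHomogeneous_natCast_mul_X_pows 2 0 (k + 2) k (by ring)
  · simpa using isHomogeneous_natCast_mul_X_pows 1 (2 * k + 2) 0 0 (by ring)
  · simpa using isHomogeneous_natCast_mul_X_pows 3 0 (k + 1) (k + 1) (by ring)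

theorem isHomogeneous_curveSyz₂ : (curveSyz₂ k).1.IsHomogeneous (3 * k + 2) ∧
    (curveSyz₂ k).2.1.IsHomogeneous (3 * k + 2) ∧ (curveSyz₂ k).2.2.IsHomogeneous (3 * k + 2) := by
  simp only [curveSyz₂]
  refine ⟨.sub ?_ ?_, .add (.sub ?_ ?_) ?_, .sub ?_ ?_⟩
  · simpa using isHomogeneous_natCast_mul_X_pows 2 (2 * k + 2) k 0 (by ring)
  · simpa using isHomogeneous_natCast_mul_X_pows 2 0 (2 * k + 1) (k + 1) (by ring)
  · simpa using isHomogeneous_natCast_mul_X_pows 10 (3 * k + 2) 0 0 (by ring)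
  · simpa using isHomogeneous_natCast_mul_X_pows 8 (2 * k + 1) (k + 1) 0 (by ring)
  · simpa using isHomogeneous_natCast_mul_X_pows 30 k (k + 1) (k + 1) (by ring)
  · simpa using isHomogeneous_natCast_mul_X_pows 8 (2 * k + 1) k 1 (by ring)
  · simpa using isHomogeneous_natCast_mul_X_pows 45 k k (k + 2) (by ring)

theorem existsUnique_eq_smul_curveSyz₁_add_smul_curveSyz₂ {v : P3 × P3 × P3}
    (hv : IsSyzygy (curvePoly k) v) :
    ∃! p : P3 × P3, v = p.1 • curveSyz₁ k + p.2 • curveSyz₂ k := by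
  rw [← (tripleEquiv P3).existsUnique_eq_smul_add_smul_iff]
  refine existsUnique_eq_smul_add_smul (isSyzygy_iff_dotProduct.1 (isSyzygy_curveSyz₁ k))
    (isSyzygy_iff_dotProduct.1 (isSyzygy_curveSyz₂ k)) (X_dotProduct_gradient_curvePoly k) ?_
    (curvePoly_ne_zero k) (X_dotProduct_curveSyz₁_cross_curveSyz₂ k) ?_
    (isRelPrime_curvePoly_pderiv_two k) (isSyzygy_iff_dotProduct.1 hv)
  · exact_mod_cast (by omega : 5 * (k + 1) ≠ 0)
  · exact_mod_cast isUnit_natCast (σ := Fin 3) (K := ℂ) (n := 10) (by norm_num)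

end Curve

/-- The curve `f = (y^m z^m - x^{2m})² y^m - x^{5m}` is free with exponents
`(2m, 3m-1)`: `ρ₁, ρ₂` are syzygies of degrees `2m` and `3m-1`, and every syzygy of
`f` is uniquely `g·ρ₁ + h·ρ₂`. -/
theorem stmt18 (m : ℕ) (hm : 1 ≤ m) (f : P3)
    (hf : f = (X1 ^ m * X2 ^ m - X0 ^ (2 * m)) ^ 2 * X1 ^ m - X0 ^ (5 * m))
    (r1 r2 : P3 × P3 × P3)
    (hr1 : r1 = (0, 2 * X1 ^ (m + 1) * X2 ^ (m - 1),
      X0 ^ (2 * m) - 3 * X1 ^ m * X2 ^ m))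
    (hr2 : r2 = (2 * X0 ^ (2 * m) * X1 ^ (m - 1) - 2 * X1 ^ (2 * m - 1) * X2 ^ m,
      10 * X0 ^ (3 * m - 1) - 8 * X0 ^ (2 * m - 1) * X1 ^ m
        + 30 * X0 ^ (m - 1) * X1 ^ m * X2 ^ m,
      8 * X0 ^ (2 * m - 1) * X1 ^ (m - 1) * X2
        - 45 * X0 ^ (m - 1) * X1 ^ (m - 1) * X2 ^ (m + 1))) :
    (r1.1.IsHomogeneous (2 * m) ∧ r1.2.1.IsHomogeneous (2 * m) ∧
      r1.2.2.IsHomogeneous (2 * m)) ∧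
    (r2.1.IsHomogeneous (3 * m - 1) ∧ r2.2.1.IsHomogeneous (3 * m - 1) ∧
      r2.2.2.IsHomogeneous (3 * m - 1)) ∧
    (r1.1 * pderiv 0 f + r1.2.1 * pderiv 1 f + r1.2.2 * pderiv 2 f = 0) ∧ (r2.1 * pderiv 0 f + r2.2.1 * pderiv 1 f + r2.2.2 * pderiv 2 f = 0) ∧
    (∀ v : P3 × P3 × P3, v.1 * pderiv 0 f + v.2.1 * pderiv 1 f + v.2.2 * pderiv 2 f = 0 →
      ∃! gh : P3 × P3, v = gh.1 • r1 + gh.2 • r2) := by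
  obtain ⟨k, rfl⟩ := Nat.exists_eq_add_of_le' hm
  have h2 : 2 * (k + 1) - 1 = 2 * k + 1 := by omega
  have h3 : 3 * (k + 1) - 1 = 3 * k + 2 := by omega
  obtain rfl : f = curvePoly k := by rw [hf, curvePoly, curveU]; ring
  obtain rfl : r1 = curveSyz₁ k := by rw [hr1, curveSyz₁, Nat.add_sub_cancel]; ring_nf
  obtain rfl : r2 = curveSyz₂ k := by rw [hr2, curveSyz₂, Nat.add_sub_cancel, h2, h3]; ring_nf
  rw [h3]
  exact ⟨isHomogeneous_curveSyz₁ k, isHomogeneous_curveSyz₂ k, isSyzygy_curveSyz₁ k,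
    isSyzygy_curveSyz₂ k, fun v hv => existsUnique_eq_smul_curveSyz₁_add_smul_curveSyz₂ k hv⟩

end
end

section
/- Let m ≥ 2 be an integer and let f = (x^m − y^m)(x^m − z^m)(y^m − z^m) ∈ S. Set ρ₁ = (x^{m+1} − 2xy^m − 2xz^m, y^{m+1} − 2yz^m − 2yx^m, z^{m+1} − 2zx^m − 2zy^m) and ρ₂ = (y^{m−1}z^{m−1}, x^{m−1}z^{m−1}, x^{m−1}y^{m−1}). Then: (i) ρ₁ and ρ₂ are syzygies of f, i.e., their components (a,b,c) satisfy a f_x + b f_y + c f_z = 0; (ii) the divergence of ρ₂ vanishes: ∂_x(y^{m−1}z^{m−1}) + ∂_y(x^{m−1}z^{m−1}) + ∂_z(x^{m−1}y^{m−1}) = 0; and (iii) if m = 3m′ for an integer m′ ≥ 1, then the divergence of (xyz)^{m′−1}·ρ₁ vanishes, i.e., ∂_x((xyz)^{m′−1}(x^{m+1} − 2xy^m − 2xz^m)) + ∂_y((xyz)^{m′−1}(y^{m+1} − 2yz^m − 2yx^m)) + ∂_z((xyz)^{m′−1}(z^{m+1} − 2zx^m − 2zy^m)) = 0. -/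
open MvPolynomial

noncomputable section

/-! Write `u = x^m, v = y^m, w = z^m` and `g = (u - v)(u - w)(v - w)`, so that
`f_x = m x^{m-1} g_u`, and similarly for `y`, `z`. Then
`ρ₂ · ∇f = m (xyz)^{m-1} (g_u + g_v + g_w)` vanishes because `g` is invariant under
translation, and `ρ₁ · ∇f = m Σ u (u - 2v - 2w) g_u` vanishes by the Euler relations
`Σ u g_u = 3g` and `Σ u² g_u = 2(u + v + w) g` of the Vandermonde determinant.
For `h = (xyz)^k` the product rule gives `div (h ρ₁) = h div ρ₁ + ρ₁(h)`, where
`div ρ₁ = (m - 3)(x^m + y^m + z^m)` and `ρ₁(h) = -3k h (x^m + y^m + z^m)`;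
the two cancel exactly when `m = 3(k + 1)`. -/

theorem MvPolynomial.pderiv_ofNat {σ R : Type*} [CommSemiring R] (i : σ) (n : ℕ)
    [n.AtLeastTwo] :
    pderiv i (ofNat(n) : MvPolynomial σ R) = 0 :=
  (pderiv i).map_natCast n

def derivAlong (v : P3 × P3 × P3) (h : P3) : P3 :=
  v.1 * pderiv 0 h + v.2.1 * pderiv 1 h + v.2.2 * pderiv 2 h

def divergence (v : P3 × P3 × P3) : P3 :=
  pderiv 0 v.1 + pderiv 1 v.2.1 + pderiv 2 v.2.2

theorem divergence_smul (h : P3) (v : P3 × P3 × P3) :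
    divergence (h • v) = h * divergence v + derivAlong v h := by
  simp only [divergence, derivAlong, Prod.smul_fst, Prod.smul_snd, smul_eq_mul, pderiv_mul]
  ring

section Arrangement

variable (m : ℕ)

def arrangementPoly : P3 :=
  (X0 ^ m - X1 ^ m) * (X0 ^ m - X2 ^ m) * (X1 ^ m - X2 ^ m)

def rho1 : P3 × P3 × P3 :=
  (X0 ^ (m + 1) - 2 * X0 * X1 ^ m - 2 * X0 * X2 ^ m,
    X1 ^ (m + 1) - 2 * X1 * X2 ^ m - 2 * X1 * X0 ^ m,
    X2 ^ (m + 1) - 2 * X2 * X0 ^ m - 2 * X2 * X1 ^ m)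

def rho2 : P3 × P3 × P3 :=
  (X1 ^ (m - 1) * X2 ^ (m - 1), X0 ^ (m - 1) * X2 ^ (m - 1), X0 ^ (m - 1) * X1 ^ (m - 1))

theorem pderiv_zero_arrangementPoly :
    pderiv 0 (arrangementPoly m)
      = m * X0 ^ (m - 1) * ((2 * X0 ^ m - X1 ^ m - X2 ^ m) * (X1 ^ m - X2 ^ m)) := by
  simp only [arrangementPoly, map_sub, pderiv_mul, pderiv_pow, pderiv_X_self, pderiv_X_of_ne,
    ne_eq, Fin.reduceEq, not_false_eq_true]
  ring

theorem pderiv_one_arrangementPoly :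
    pderiv 1 (arrangementPoly m)
      = m * X1 ^ (m - 1) * ((X0 ^ m - X2 ^ m) * (X0 ^ m - 2 * X1 ^ m + X2 ^ m)) := by
  simp only [arrangementPoly, map_sub, pderiv_mul, pderiv_pow, pderiv_X_self, pderiv_X_of_ne,
    ne_eq, Fin.reduceEq, not_false_eq_true]
  ring

theorem pderiv_two_arrangementPoly :
    pderiv 2 (arrangementPoly m)
      = -(m * X2 ^ (m - 1) * ((X0 ^ m - X1 ^ m) * (X0 ^ m + X1 ^ m - 2 * X2 ^ m))) := by
  simp only [arrangementPoly, map_sub, pderiv_mul, pderiv_pow, pderiv_X_self, pderiv_X_of_ne,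
    ne_eq, Fin.reduceEq, not_false_eq_true]
  ring

theorem derivAlong_rho1_arrangementPoly : derivAlong (rho1 m) (arrangementPoly m) = 0 := by
  rw [derivAlong, pderiv_zero_arrangementPoly, pderiv_one_arrangementPoly,
    pderiv_two_arrangementPoly]
  simp only [rho1]
  cases m with
  | zero => simp
  | succ n => simp only [Nat.add_sub_cancel]; push_cast; ring

theorem derivAlong_rho2_arrangementPoly : derivAlong (rho2 m) (arrangementPoly m) = 0 := by
  rw [derivAlong, pderiv_zero_arrangementPoly, pderiv_one_arrangementPoly,
    pderiv_two_arrangementPoly]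
  simp only [rho2]
  ring

theorem divergence_rho2 : divergence (rho2 m) = 0 := by
  simp only [divergence, rho2, pderiv_mul, pderiv_pow, pderiv_X_of_ne, ne_eq, Fin.reduceEq,
    not_false_eq_true]
  ring

theorem divergence_rho1 :
    divergence (rho1 m) = ((m : P3) - 3) * (X0 ^ m + X1 ^ m + X2 ^ m) := by
  simp only [divergence, rho1, map_sub, pderiv_mul, pderiv_pow, pderiv_X_self, pderiv_X_of_ne,
    pderiv_ofNat, ne_eq, Fin.reduceEq, not_false_eq_true, Nat.add_sub_cancel]
  push_cast
  ring

theorem derivAlong_rho1_xyz_pow (k : ℕ) :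
    derivAlong (rho1 m) ((X0 * X1 * X2) ^ k)
      = -3 * k * (X0 * X1 * X2) ^ k * (X0 ^ m + X1 ^ m + X2 ^ m) := by
  simp only [derivAlong, rho1, pderiv_mul, pderiv_pow, pderiv_X_self, pderiv_X_of_ne, ne_eq,
    Fin.reduceEq, not_false_eq_true]
  cases k with
  | zero => simp
  | succ n => simp only [Nat.add_sub_cancel]; push_cast; ring

theorem divergence_xyz_pow_smul_rho1 (k : ℕ) :
    divergence ((X0 * X1 * X2) ^ k • rho1 m)
      = ((m : P3) - 3 - 3 * k) * (X0 * X1 * X2) ^ k * (X0 ^ m + X1 ^ m + X2 ^ m) := by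
  rw [divergence_smul, divergence_rho1, derivAlong_rho1_xyz_pow]
  ring

end Arrangement

theorem stmt19_general (m : ℕ) (f : P3)
    (hf : f = (X0 ^ m - X1 ^ m) * (X0 ^ m - X2 ^ m) * (X1 ^ m - X2 ^ m))
    (r1 r2 : P3 × P3 × P3)
    (hr1 : r1 = (X0 ^ (m + 1) - 2 * X0 * X1 ^ m - 2 * X0 * X2 ^ m,
      X1 ^ (m + 1) - 2 * X1 * X2 ^ m - 2 * X1 * X0 ^ m,
      X2 ^ (m + 1) - 2 * X2 * X0 ^ m - 2 * X2 * X1 ^ m))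
    (hr2 : r2 = (X1 ^ (m - 1) * X2 ^ (m - 1), X0 ^ (m - 1) * X2 ^ (m - 1),
      X0 ^ (m - 1) * X1 ^ (m - 1))) :
    (r1.1 * pderiv 0 f + r1.2.1 * pderiv 1 f + r1.2.2 * pderiv 2 f = 0) ∧ (r2.1 * pderiv 0 f + r2.2.1 * pderiv 1 f + r2.2.2 * pderiv 2 f = 0) ∧
    (pderiv 0 r2.1 + pderiv 1 r2.2.1 + pderiv 2 r2.2.2 = 0) ∧
    (∀ m' : ℕ, 1 ≤ m' → m = 3 * m' →
      pderiv 0 ((X0 * X1 * X2) ^ (m' - 1) * r1.1)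
        + pderiv 1 ((X0 * X1 * X2) ^ (m' - 1) * r1.2.1)
        + pderiv 2 ((X0 * X1 * X2) ^ (m' - 1) * r1.2.2) = 0) := by
  subst hf hr1 hr2
  refine ⟨derivAlong_rho1_arrangementPoly m, derivAlong_rho2_arrangementPoly m,
    divergence_rho2 m, ?_⟩
  rintro m' hm' rfl
  have hcoeff : ((3 * m' : ℕ) : P3) - 3 - 3 * ((m' - 1 : ℕ) : P3) = 0 := by
    push_cast [Nat.cast_sub hm']
    ring
  exact (divergence_xyz_pow_smul_rho1 (3 * m') (m' - 1)).trans
    (by rw [hcoeff, zero_mul, zero_mul])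

/-- For the monomial arrangement `A(m,m,3)`, `m ≥ 2`: `ρ₁` and `ρ₂` are syzygies of
`f`, the divergence of `ρ₂` vanishes, and if `m = 3m'` then the divergence of
`(xyz)^{m'-1}·ρ₁` vanishes. -/
theorem stmt19 (m : ℕ) (hm : 2 ≤ m) (f : P3)
    (hf : f = (X0 ^ m - X1 ^ m) * (X0 ^ m - X2 ^ m) * (X1 ^ m - X2 ^ m))
    (r1 r2 : P3 × P3 × P3)
    (hr1 : r1 = (X0 ^ (m + 1) - 2 * X0 * X1 ^ m - 2 * X0 * X2 ^ m,
      X1 ^ (m + 1) - 2 * X1 * X2 ^ m - 2 * X1 * X0 ^ m,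
      X2 ^ (m + 1) - 2 * X2 * X0 ^ m - 2 * X2 * X1 ^ m))
    (hr2 : r2 = (X1 ^ (m - 1) * X2 ^ (m - 1), X0 ^ (m - 1) * X2 ^ (m - 1),
      X0 ^ (m - 1) * X1 ^ (m - 1))) :
    (r1.1 * pderiv 0 f + r1.2.1 * pderiv 1 f + r1.2.2 * pderiv 2 f = 0) ∧ (r2.1 * pderiv 0 f + r2.2.1 * pderiv 1 f + r2.2.2 * pderiv 2 f = 0) ∧
    (pderiv 0 r2.1 + pderiv 1 r2.2.1 + pderiv 2 r2.2.2 = 0) ∧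
    (∀ m' : ℕ, 1 ≤ m' → m = 3 * m' →
      pderiv 0 ((X0 * X1 * X2) ^ (m' - 1) * r1.1)
        + pderiv 1 ((X0 * X1 * X2) ^ (m' - 1) * r1.2.1)
        + pderiv 2 ((X0 * X1 * X2) ^ (m' - 1) * r1.2.2) = 0) :=
  stmt19_general m f hf r1 r2 hr1 hr2

end
end
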